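/- arXiv:2112.10095 — 4 statements merged into one kernel-verified Lean document; each statement's English description precedes it below -/
import Mathlib

section
/- Let 0 = x₀ ≤ x₁ ≤ ⋯ ≤ x_n, let z₁ ≥ z₂ ≥ ⋯ ≥ z_n ≥ 0, and let y ≥ 0. Then the volume of the union ⋃_{j=1}^{n} [0,x_j]×[0,y]×[0,z_j] equals y · Σ_{j=1}^{n} (x_j − x_{j−1})·z_j. -/
/-! Replacing the `j`-th box by its slab `x (j-1) ≤ t ≤ x j` does not change the union: a point of
the `j`-th box whose first coordinate lies in `[x (k-1), x k]` with `k ≤ j` lies in the `k`-th slab,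
which is at least as tall since `z` is antitone. Distinct slabs meet only in null planes
`t = x k`, so the volume is the sum `∑ (x j - x (j-1)) * y * z j` of the slab volumes. -/

open MeasureTheory Set

variable {α β : Type*}

theorem exists_mem_Icc_pred_of_mem_Icc [LinearOrder α] {x : ℕ → α} {a : α} {j : ℕ} (hj : 1 ≤ j)
    (ha : a ∈ Icc (x 0) (x j)) : ∃ k ∈ Finset.Icc 1 j, a ∈ Icc (x (k - 1)) (x k) := by
  induction j, hj using Nat.le_induction with
  | base => exact ⟨1, by simp, ha⟩
  | succ j hj ih =>
    by_cases h : a ≤ x j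
    · obtain ⟨k, hk, hak⟩ := ih ⟨ha.1, h⟩
      exact ⟨k, Finset.Icc_subset_Icc_right j.le_succ hk, hak⟩
    · exact ⟨j + 1, Finset.mem_Icc.2 ⟨by omega, le_rfl⟩, le_of_not_ge h, ha.2⟩

theorem biUnion_Icc_prod_eq_biUnion_Icc_pred_prod [LinearOrder α] {x : ℕ → α} {S : ℕ → Set β}
    {n : ℕ} (hx : MonotoneOn x (Iic n)) (hS : AntitoneOn S (Icc 1 n)) :
    ⋃ j ∈ Finset.Icc 1 n, Icc (x 0) (x j) ×ˢ S j =
      ⋃ j ∈ Finset.Icc 1 n, Icc (x (j - 1)) (x j) ×ˢ S j := by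
  refine subset_antisymm ?_ <| iUnion₂_mono fun j hj => prod_mono (Icc_subset_Icc_left ?_) le_rfl
  · simp only [iUnion_subset_iff]
    rintro j hj p ⟨hp₁, hp₂⟩
    obtain ⟨hj₁, hjn⟩ := Finset.mem_Icc.1 hj
    obtain ⟨k, hk, hpk⟩ := exists_mem_Icc_pred_of_mem_Icc hj₁ hp₁
    obtain ⟨hk₁, hkj⟩ := Finset.mem_Icc.1 hk
    exact mem_biUnion (Finset.mem_Icc.2 ⟨hk₁, hkj.trans hjn⟩)
      ⟨hpk, hS ⟨hk₁, hkj.trans hjn⟩ ⟨hj₁, hjn⟩ hkj hp₂⟩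
  · obtain ⟨-, hjn⟩ := Finset.mem_Icc.1 hj
    exact hx (Nat.zero_le _) (mem_Iic.2 (by omega)) (Nat.zero_le _)

theorem aedisjoint_Icc_prod_Icc_prod [PartialOrder α] [MeasurableSpace α] [MeasurableSpace β]
    (μ : Measure α) [NullSingletonClass μ] (ν : Measure β) [SFinite ν] {a b c d : α}
    (hbc : b ≤ c) (s t : Set β) :
    AEDisjoint (μ.prod ν) (Icc a b ×ˢ s) (Icc c d ×ˢ t) := by
  have hsub : (Icc a b ×ˢ s) ∩ (Icc c d ×ˢ t) ⊆ Icc c b ×ˢ univ :=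
    fun p ⟨⟨⟨_, hpb⟩, _⟩, ⟨⟨hcp, _⟩, _⟩⟩ => ⟨⟨hcp, hpb⟩, trivial⟩
  refine measure_mono_null hsub ?_
  rw [Measure.prod_prod, (subsingleton_Icc_of_ge hbc).measure_zero μ, zero_mul]

theorem volume_prod_biUnion_Icc_pred_prod [MeasurableSpace β] (ν : Measure β) [SFinite ν]
    {x : ℕ → ℝ} {S : ℕ → Set β} {n : ℕ} (hx : MonotoneOn x (Iic n))
    (hS : ∀ j, MeasurableSet (S j)) :
    (volume.prod ν) (⋃ j ∈ Finset.Icc 1 n, Icc (x (j - 1)) (x j) ×ˢ S j) =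
      ∑ j ∈ Finset.Icc 1 n, ENNReal.ofReal (x j - x (j - 1)) * ν (S j) := by
  have hdisj : ∀ i ∈ Finset.Icc 1 n, ∀ j ∈ Finset.Icc 1 n, i < j →
      AEDisjoint (volume.prod ν) (Icc (x (i - 1)) (x i) ×ˢ S i) (Icc (x (j - 1)) (x j) ×ˢ S j) :=
    fun i hi j hj hij => by
      obtain ⟨-, hin⟩ := Finset.mem_Icc.1 hi
      obtain ⟨-, hjn⟩ := Finset.mem_Icc.1 hj
      exact aedisjoint_Icc_prod_Icc_prod _ _
        (hx (mem_Iic.2 hin) (mem_Iic.2 (by omega)) (by omega)) _ _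
  rw [measure_biUnion_finset₀ ?_ fun j _ => (measurableSet_Icc.prod (hS j)).nullMeasurableSet]
  · simp only [Measure.prod_prod, Real.volume_Icc]
  · intro i hi j hj hij
    rcases hij.lt_or_gt with h | h
    · exact hdisj i hi j hj h
    · exact (hdisj j hj i hi h).symm

theorem staircase_union_volume_general (n : ℕ) (x z : ℕ → ℝ) (y : ℝ)
    (hx0 : x 0 = 0) (hxmono : ∀ j, j < n → x j ≤ x (j+1))
    (hzanti : ∀ j, 1 ≤ j → j < n → z (j+1) ≤ z j)
    (hzn : 0 ≤ z n) :
    volume (⋃ j ∈ Finset.Icc 1 n,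
        Icc (0:ℝ) (x j) ×ˢ Icc (0:ℝ) y ×ˢ Icc (0:ℝ) (z j)) =
      ENNReal.ofReal (y * ∑ j ∈ Finset.Icc 1 n, (x j - x (j-1)) * z j) := by
  have hx : MonotoneOn x (Iic n) :=
    monotoneOn_of_le_add_one ordConnected_Iic fun j _ _ hj => hxmono j (mem_Iic.1 hj)
  have hz : AntitoneOn z (Icc 1 n) :=
    antitoneOn_of_add_one_le ordConnected_Icc fun j _ hj hj' => hzanti j hj.1 hj'.2
  have hS : AntitoneOn (fun j => Icc (0:ℝ) y ×ˢ Icc (0:ℝ) (z j)) (Icc 1 n) :=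
    fun i hi j hj hij => prod_mono le_rfl (Icc_subset_Icc_right (hz hi hj hij))
  have hx_step : ∀ j ∈ Finset.Icc 1 n, 0 ≤ x j - x (j - 1) := fun j hj => by
    obtain ⟨-, hjn⟩ := Finset.mem_Icc.1 hj
    exact sub_nonneg.2 (hx (mem_Iic.2 (by omega)) (mem_Iic.2 hjn) (by omega))
  have hz_nonneg : ∀ j ∈ Finset.Icc 1 n, 0 ≤ z j := fun j hj => by
    obtain ⟨hj₁, hjn⟩ := Finset.mem_Icc.1 hj
    exact hzn.trans (hz ⟨hj₁, hjn⟩ ⟨hj₁.trans hjn, le_rfl⟩ hjn)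
  have hterm : ∀ j ∈ Finset.Icc 1 n, 0 ≤ (x j - x (j - 1)) * z j :=
    fun j hj => mul_nonneg (hx_step j hj) (hz_nonneg j hj)
  have hunion := biUnion_Icc_prod_eq_biUnion_Icc_pred_prod hx hS
  rw [hx0] at hunion
  rw [Measure.volume_eq_prod, hunion, volume_prod_biUnion_Icc_pred_prod _ hx
    fun j => measurableSet_Icc.prod measurableSet_Icc, ENNReal.ofReal_mul' (Finset.sum_nonneg hterm),
    ENNReal.ofReal_sum_of_nonneg hterm, Finset.mul_sum]
  refine Finset.sum_congr rfl fun j hj => ?_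
  rw [Measure.volume_eq_prod, Measure.prod_prod, Real.volume_Icc, Real.volume_Icc, sub_zero,
    sub_zero, ENNReal.ofReal_mul (hx_step j hj)]
  ring

theorem staircase_union_volume (n : ℕ) (hn : 1 ≤ n) (x z : ℕ → ℝ) (y : ℝ)
    (hx0 : x 0 = 0) (hxmono : ∀ j, j < n → x j ≤ x (j+1))
    (hzanti : ∀ j, 1 ≤ j → j < n → z (j+1) ≤ z j)
    (hzn : 0 ≤ z n) (hy : 0 ≤ y) :
    volume (⋃ j ∈ Finset.Icc 1 n,
        Icc (0:ℝ) (x j) ×ˢ Icc (0:ℝ) y ×ˢ Icc (0:ℝ) (z j)) =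
      ENNReal.ofReal (y * ∑ j ∈ Finset.Icc 1 n, (x j - x (j-1)) * z j) :=
  staircase_union_volume_general n x z y hx0 hxmono hzanti hzn
end

section
/- Fix integers k ≥ 1, m ≥ 1, a set A ⊆ {1,…,k}×{1,…,m}, and a subset J ⊆ {1,…,m}. Let P = { p_{i,j} = (j, i, −(k+2)j − i) : (i,j) ∈ A } and B_J = { b_j = (j, k+1, −(k+2)j + 1) : j ∉ J }. Then the set of maximal points of S = P ∪ B_J is exactly B_J ∪ { p_{i,j} : (i,j) ∈ A, j ∈ J }. -/
/-- `Dominates p q` means that `q` dominates `p` coordinatewise in `ℤ³`. -/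
def Dominates (p q : ℤ × ℤ × ℤ) : Prop :=
  p.1 ≤ q.1 ∧ p.2.1 ≤ q.2.1 ∧ p.2.2 ≤ q.2.2

/-! Every point of `P ∪ B_J` lies in a column `j` (its first coordinate) with third coordinate
`-(k + 2) * j + c`, where the offset `c` ranges over `[-k, 1]`. Since the offsets vary by less
than the slope `k + 2`, a point can only be dominated inside its own column. There the blocking
point `b_j` dominates every `p_{i,j}`, while the points `p_{i,j}` are pairwise incomparable because
their second and third coordinates move in opposite directions. -/

def liftedPoint (k : ℤ) (p : ℤ × ℤ) : ℤ × ℤ × ℤ := (p.2, p.1, -(k + 2) * p.2 - p.1)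

def blockingPoint (k j : ℤ) : ℤ × ℤ × ℤ := (j, k + 1, -(k + 2) * j + 1)

lemma eq_of_le_of_offset_le {k j j' c c' : ℤ} (hk : 0 < k + 2) (hc : c' - c < k + 2)
    (hj : j ≤ j') (h : -(k + 2) * j + c ≤ -(k + 2) * j' + c') : j = j' := by
  by_contra hne
  nlinarith [show j + 1 ≤ j' by omega]

lemma eq_of_dominates_liftedPoint {k : ℤ} {p p' : ℤ × ℤ} (hk : 0 < k + 2) (hp : p.1 ≤ k)
    (hp' : 1 ≤ p'.1) (h : Dominates (liftedPoint k p) (liftedPoint k p')) : p' = p := by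
  obtain ⟨hj, hi, hc⟩ := h
  simp only [liftedPoint] at hj hi hc
  have hcol : p.2 = p'.2 :=
    eq_of_le_of_offset_le (c := -p.1) (c' := -p'.1) hk (by linarith [hp, hp']) hj (by linarith)
  rw [hcol] at hc
  exact Prod.ext (by omega) hcol.symm

lemma dominates_liftedPoint_blockingPoint_iff {k j : ℤ} {p : ℤ × ℤ} (hk : 0 < k + 2)
    (hp : -1 ≤ p.1) (hp' : p.1 ≤ k) :
    Dominates (liftedPoint k p) (blockingPoint k j) ↔ j = p.2 := by
  constructor
  · rintro ⟨hj, -, hc⟩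
    simp only [liftedPoint, blockingPoint] at hj hc
    exact (eq_of_le_of_offset_le (c := -p.1) (c' := 1) hk (by omega) hj (by linarith)).symm
  · rintro rfl
    exact ⟨le_rfl, by simp only [liftedPoint, blockingPoint]; omega, by
      simp only [liftedPoint, blockingPoint]; omega⟩

lemma not_dominates_blockingPoint_liftedPoint {k j : ℤ} {p : ℤ × ℤ} (hp : p.1 ≤ k) :
    ¬ Dominates (blockingPoint k j) (liftedPoint k p) := by
  rintro ⟨-, hi, -⟩
  simp only [liftedPoint, blockingPoint] at hi
  omega

lemma blockingPoint_ne_liftedPoint {k j : ℤ} {p : ℤ × ℤ} (hp : p.1 ≤ k) :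
    blockingPoint k j ≠ liftedPoint k p := by
  intro h
  have h' := not_dominates_blockingPoint_liftedPoint (j := j) hp
  rw [← h] at h'
  exact h' ⟨le_rfl, le_rfl, le_rfl⟩

lemma eq_of_dominates_blockingPoint {k j j' : ℤ} (hk : 0 < k + 2)
    (h : Dominates (blockingPoint k j) (blockingPoint k j')) : j' = j :=
  (eq_of_le_of_offset_le (c := 1) (c' := 1) hk (by omega) h.1 h.2.2).symm

theorem maximal_points_after_deletion_general (k m : ℤ) (hk : 1 ≤ k)
    (A : Set (ℤ × ℤ)) (hA : ∀ p ∈ A, 1 ≤ p.1 ∧ p.1 ≤ k ∧ 1 ≤ p.2 ∧ p.2 ≤ m)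
    (J : Set ℤ) :
    let P : Set (ℤ × ℤ × ℤ) :=
      {q | ∃ p ∈ A, q = (p.2, p.1, -(k+2)*p.2 - p.1)}
    let BJ : Set (ℤ × ℤ × ℤ) :=
      {q | ∃ j : ℤ, 1 ≤ j ∧ j ≤ m ∧ j ∉ J ∧ q = (j, k+1, -(k+2)*j + 1)}
    {p ∈ P ∪ BJ | ∀ q ∈ P ∪ BJ, q ≠ p → ¬ Dominates p q} =
      BJ ∪ {q | ∃ p ∈ A, p.2 ∈ J ∧ q = (p.2, p.1, -(k+2)*p.2 - p.1)} := by
  intro P BJ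
  have hk2 : 0 < k + 2 := by omega
  ext q
  simp only [Set.mem_ofPred_eq, Set.mem_union]
  constructor
  · rintro ⟨⟨p, hpA, rfl⟩ | hq, hmax⟩
    · refine Or.inr ⟨p, hpA, ?_, rfl⟩
      by_contra hpJ
      obtain ⟨hi, hik, hj, hjm⟩ := hA p hpA
      exact hmax _ (Or.inr ⟨p.2, hj, hjm, hpJ, rfl⟩) (blockingPoint_ne_liftedPoint hik)
        ((dominates_liftedPoint_blockingPoint_iff hk2 (by omega) hik).2 rfl)
    · exact Or.inl hq
  · rintro (hq | ⟨p, hpA, hpJ, rfl⟩)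
    · refine ⟨Or.inr hq, ?_⟩
      obtain ⟨j, -, -, -, rfl⟩ := hq
      rintro _ (⟨p, hpA, rfl⟩ | ⟨j', -, -, -, rfl⟩) hne hdom
      · exact not_dominates_blockingPoint_liftedPoint (hA p hpA).2.1 hdom
      · exact hne (by rw [eq_of_dominates_blockingPoint hk2 hdom])
    · obtain ⟨hi, hik, -, -⟩ := hA p hpA
      refine ⟨Or.inl ⟨p, hpA, rfl⟩, ?_⟩
      rintro _ (⟨p', hpA', rfl⟩ | ⟨j', -, -, hj'J, rfl⟩) hne hdom
      · exact hne (by rw [eq_of_dominates_liftedPoint hk2 hik (hA p' hpA').1 hdom])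
      · exact hj'J ((dominates_liftedPoint_blockingPoint_iff hk2 (by omega) hik).1 hdom ▸ hpJ)

theorem maximal_points_after_deletion (k m : ℤ) (hk : 1 ≤ k) (hm : 1 ≤ m)
    (A : Set (ℤ × ℤ)) (hA : ∀ p ∈ A, 1 ≤ p.1 ∧ p.1 ≤ k ∧ 1 ≤ p.2 ∧ p.2 ≤ m)
    (J : Set ℤ) (hJ : ∀ j ∈ J, 1 ≤ j ∧ j ≤ m) :
    let P : Set (ℤ × ℤ × ℤ) :=
      {q | ∃ p ∈ A, q = (p.2, p.1, -(k+2)*p.2 - p.1)}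
    let BJ : Set (ℤ × ℤ × ℤ) :=
      {q | ∃ j : ℤ, 1 ≤ j ∧ j ≤ m ∧ j ∉ J ∧ q = (j, k+1, -(k+2)*j + 1)}
    {p ∈ P ∪ BJ | ∀ q ∈ P ∪ BJ, q ≠ p → ¬ Dominates p q} =
      BJ ∪ {q | ∃ p ∈ A, p.2 ∈ J ∧ q = (p.2, p.1, -(k+2)*p.2 - p.1)} :=
  maximal_points_after_deletion_general k m hk A hA J
end

section
/- Let N ≥ 1 be an integer, A ⊆ {1,…,N}×{1,…,N}, and I, J ⊆ {1,…,N}. Let C = [1, N+1]×[1, N+1]. Define the family of rectangles consisting of: the unit squares [j, j+1]×[i, i+1] for each (i,j) ∉ A with 1 ≤ i,j ≤ N; the horizontal strips [1, N+1]×[i, i+1] for each i ∉ I; and the vertical strips [j, j+1]×[1, N+1] for each j ∉ J. Then the union of this family of rectangles equals C if and only if there do not exist i ∈ I and j ∈ J with (i,j) ∈ A. -/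
open Set

/-! A point of the square lies in some unit cell `[j, j+1] × [i, i+1]`, and the cell is covered
exactly when it is one of the unit squares or lies in an uncovered row or column, i.e. unless
`(i, j) ∈ A`, `i ∈ I` and `j ∈ J`. Conversely the centre of a cell meets no other cell, strip of
another row, or strip of another column, so the centre of a bad cell is not covered. -/

lemma Nat.eq_of_add_half_mem_Icc {a b : ℕ} (h : (a + 1 / 2 : ℝ) ∈ Icc (b : ℝ) (b + 1)) :
    a = b := by
  have hba : b < a + 1 := by exact_mod_cast (by linarith [h.1] : (b : ℝ) < a + 1)
  have hab : a < b + 1 := by exact_mod_cast (by linarith [h.2] : (a : ℝ) < b + 1)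
  omega

lemma Icc_natCast_subset_Icc {N k : ℕ} (hk : k ∈ Finset.Icc 1 N) :
    Icc (k : ℝ) (k + 1) ⊆ Icc 1 (N + 1) := by
  obtain ⟨hk1, hkN⟩ := Finset.mem_Icc.mp hk
  exact Icc_subset_Icc (by exact_mod_cast hk1) (by exact_mod_cast Nat.add_le_add_right hkN 1)

lemma add_half_mem_Icc {N k : ℕ} (hk : k ∈ Finset.Icc 1 N) :
    (k + 1 / 2 : ℝ) ∈ Icc (1 : ℝ) (N + 1) :=
  Icc_natCast_subset_Icc hk ⟨by linarith, by linarith⟩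

lemma exists_mem_Icc_natCast {N : ℕ} (hN : 1 ≤ N) {x : ℝ} (hx : x ∈ Icc (1 : ℝ) (N + 1)) :
    ∃ k ∈ Finset.Icc 1 N, x ∈ Icc (k : ℝ) (k + 1) := by
  have hx0 : 0 ≤ x := by linarith [hx.1]
  have hfloor : 1 ≤ ⌊x⌋₊ := Nat.one_le_floor_iff x |>.mpr hx.1
  refine ⟨min ⌊x⌋₊ N, Finset.mem_Icc.mpr ⟨le_min hfloor hN, min_le_right _ _⟩, ?_, ?_⟩
  · calc ((min ⌊x⌋₊ N : ℕ) : ℝ) ≤ ⌊x⌋₊ := by exact_mod_cast min_le_left _ _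
      _ ≤ x := Nat.floor_le hx0
  · rcases le_total ⌊x⌋₊ N with h | h
    · rw [min_eq_left h]
      exact (Nat.lt_floor_add_one x).le
    · rw [min_eq_right h]
      exact hx.2

/-- The pair `(i, j)` indexes the unit square `[j, j+1] × [i, i+1]`: `i` is the row, `j` the
column. -/
def gridCover (N : ℕ) (A : Finset (ℕ × ℕ)) (I J : Finset ℕ) : Set (ℝ × ℝ) :=
  (⋃ p ∈ (Finset.Icc 1 N ×ˢ Finset.Icc 1 N) \ A,
    Icc ((p.2:ℝ)) ((p.2:ℝ)+1) ×ˢ Icc ((p.1:ℝ)) ((p.1:ℝ)+1)) ∪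
  (⋃ i ∈ Finset.Icc 1 N \ I,
    Icc (1:ℝ) ((N:ℝ)+1) ×ˢ Icc ((i:ℝ)) ((i:ℝ)+1)) ∪
  (⋃ j ∈ Finset.Icc 1 N \ J,
    Icc ((j:ℝ)) ((j:ℝ)+1) ×ˢ Icc (1:ℝ) ((N:ℝ)+1))

section gridCover

variable {N : ℕ} {A : Finset (ℕ × ℕ)} {I J : Finset ℕ}

lemma gridCover_subset :
    gridCover N A I J ⊆ Icc (1 : ℝ) (N + 1) ×ˢ Icc (1 : ℝ) (N + 1) := by
  simp only [gridCover, union_subset_iff, iUnion_subset_iff, Finset.mem_sdiff,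
    Finset.mem_product]
  refine ⟨⟨fun p hp => ?_, fun i hi => ?_⟩, fun j hj => ?_⟩
  · exact prod_mono (Icc_natCast_subset_Icc hp.1.2) (Icc_natCast_subset_Icc hp.1.1)
  · exact prod_mono subset_rfl (Icc_natCast_subset_Icc hi.1)
  · exact prod_mono (Icc_natCast_subset_Icc hj.1) subset_rfl

lemma cell_subset_gridCover {i j : ℕ} (hi : i ∈ Finset.Icc 1 N) (hj : j ∈ Finset.Icc 1 N)
    (hcov : (i, j) ∉ A ∨ i ∉ I ∨ j ∉ J) :
    Icc (j : ℝ) (j + 1) ×ˢ Icc (i : ℝ) (i + 1) ⊆ gridCover N A I J := by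
  rintro ⟨x, y⟩ ⟨hx, hy⟩
  simp only [gridCover, mem_union, mem_iUnion, mem_prod, Finset.mem_sdiff, Finset.mem_product,
    exists_prop]
  rcases hcov with hA | hI | hJ
  · exact .inl (.inl ⟨(i, j), ⟨⟨hi, hj⟩, hA⟩, hx, hy⟩)
  · exact .inl (.inr ⟨i, ⟨hi, hI⟩, Icc_natCast_subset_Icc hj hx, hy⟩)
  · exact .inr ⟨j, ⟨hj, hJ⟩, hx, Icc_natCast_subset_Icc hi hy⟩

lemma center_mem_gridCover_iff {i j : ℕ} (hi : i ∈ Finset.Icc 1 N) (hj : j ∈ Finset.Icc 1 N) :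
    ((j : ℝ) + 1 / 2, (i : ℝ) + 1 / 2) ∈ gridCover N A I J ↔ (i, j) ∉ A ∨ i ∉ I ∨ j ∉ J := by
  refine ⟨fun h => ?_, fun hcov => cell_subset_gridCover hi hj hcov
    ⟨⟨by linarith, by linarith⟩, by linarith, by linarith⟩⟩
  simp only [gridCover, mem_union, mem_iUnion, mem_prod, Finset.mem_sdiff, exists_prop] at h
  rcases h with (⟨⟨i', j'⟩, ⟨-, hA⟩, hx, hy⟩ | ⟨i', ⟨-, hI⟩, -, hy⟩) | ⟨j', ⟨-, hJ⟩, hx, -⟩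
  · obtain rfl := Nat.eq_of_add_half_mem_Icc hx
    obtain rfl := Nat.eq_of_add_half_mem_Icc hy
    exact .inl hA
  · obtain rfl := Nat.eq_of_add_half_mem_Icc hy
    exact .inr (.inl hI)
  · obtain rfl := Nat.eq_of_add_half_mem_Icc hx
    exact .inr (.inr hJ)

end gridCover

theorem rectangle_cover_iff_no_intersection_general (N : ℕ) (hN : 1 ≤ N)
    (A : Finset (ℕ × ℕ)) (I J : Finset ℕ)
    (hI : I ⊆ Finset.Icc 1 N) (hJ : J ⊆ Finset.Icc 1 N) :
    let C : Set (ℝ × ℝ) := Icc (1:ℝ) ((N:ℝ)+1) ×ˢ Icc (1:ℝ) ((N:ℝ)+1)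
    let U : Set (ℝ × ℝ) :=
      (⋃ p ∈ (Finset.Icc 1 N ×ˢ Finset.Icc 1 N) \ A,
        Icc ((p.2:ℝ)) ((p.2:ℝ)+1) ×ˢ Icc ((p.1:ℝ)) ((p.1:ℝ)+1)) ∪
      (⋃ i ∈ Finset.Icc 1 N \ I,
        Icc (1:ℝ) ((N:ℝ)+1) ×ˢ Icc ((i:ℝ)) ((i:ℝ)+1)) ∪
      (⋃ j ∈ Finset.Icc 1 N \ J,
        Icc ((j:ℝ)) ((j:ℝ)+1) ×ˢ Icc (1:ℝ) ((N:ℝ)+1))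
    (U = C ↔ ¬ ∃ i ∈ I, ∃ j ∈ J, (i, j) ∈ A) := by
  intro C U
  change gridCover N A I J = C ↔ _
  constructor
  · rintro hU ⟨i, hi, j, hj, hij⟩
    have hcenter : ((j : ℝ) + 1 / 2, (i : ℝ) + 1 / 2) ∈ gridCover N A I J :=
      hU ▸ ⟨add_half_mem_Icc (hJ hj), add_half_mem_Icc (hI hi)⟩
    have := (center_mem_gridCover_iff (hI hi) (hJ hj)).mp hcenter
    tauto
  · intro hno
    refine gridCover_subset.antisymm ?_
    rintro ⟨x, y⟩ ⟨hx, hy⟩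
    obtain ⟨j, hj, hxj⟩ := exists_mem_Icc_natCast hN hx
    obtain ⟨i, hi, hyi⟩ := exists_mem_Icc_natCast hN hy
    refine cell_subset_gridCover hi hj ?_ ⟨hxj, hyi⟩
    by_contra! hbad
    exact hno ⟨i, hbad.2.1, j, hbad.2.2, hbad.1⟩

theorem rectangle_cover_iff_no_intersection (N : ℕ) (hN : 1 ≤ N)
    (A : Finset (ℕ × ℕ)) (I J : Finset ℕ)
    (hA : A ⊆ Finset.Icc 1 N ×ˢ Finset.Icc 1 N)
    (hI : I ⊆ Finset.Icc 1 N) (hJ : J ⊆ Finset.Icc 1 N) :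
    let C : Set (ℝ × ℝ) := Icc (1:ℝ) ((N:ℝ)+1) ×ˢ Icc (1:ℝ) ((N:ℝ)+1)
    let U : Set (ℝ × ℝ) :=
      (⋃ p ∈ (Finset.Icc 1 N ×ˢ Finset.Icc 1 N) \ A,
        Icc ((p.2:ℝ)) ((p.2:ℝ)+1) ×ˢ Icc ((p.1:ℝ)) ((p.1:ℝ)+1)) ∪
      (⋃ i ∈ Finset.Icc 1 N \ I,
        Icc (1:ℝ) ((N:ℝ)+1) ×ˢ Icc ((i:ℝ)) ((i:ℝ)+1)) ∪
      (⋃ j ∈ Finset.Icc 1 N \ J,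
        Icc ((j:ℝ)) ((j:ℝ)+1) ×ˢ Icc (1:ℝ) ((N:ℝ)+1))
    (U = C ↔ ¬ ∃ i ∈ I, ∃ j ∈ J, (i, j) ∈ A) :=
  rectangle_cover_iff_no_intersection_general N hN A I J hI hJ
end

section
/- Fix integers k ≥ 2, m ≥ 1, 1 ≤ i' ≤ k, a set A ⊆ {1,…,k}×{1,…,m}, and J ⊆ {1,…,m}. Consider the family of half-open boxes in ℝ²: s_{i,j} = [kj, kj+1)×[i, i+1) for (i,j) ∈ A; b_j = [kj, kj+k)×[1, k+1) for j ∈ J; and the two boxes H₁ = [k, k+km²)×[i', i'+km²) and H₂ = [k, k+km²)×[i'+1−km², i'+1). Then the depth of this family (the maximum over points x ∈ ℝ² of the number of members containing x) equals 4 if there exists j ∈ J with (i',j) ∈ A, and is at most 3 otherwise. -/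
/-!
Within each family the boxes are pairwise disjoint (unit squares sit in distinct cells of the
grid `kℕ × ℕ`, blocks in distinct columns of width `k`), so each family contributes at most one
to the depth, and depth 4 needs a point of `H₁ ∩ H₂`, a unit square and a block at once. Points of
`H₁ ∩ H₂` lie in the row `[i', i' + 1)` and a unit square meeting block `j` lies in column `j`, so
that square is `s_{i',j}`. Conversely, the corner `(kj, i')` of `s_{i',j}` lies in all four boxes.
-/

open Set
open scoped Classical

open Function

theorem Pairwise.eq_of_mem_of_mem {ι β : Type*} {f : ι → Set β} (hf : Pairwise (Disjoint on f))
    {i j : ι} {x : β} (hi : x ∈ f i) (hj : x ∈ f j) : i = j :=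
  by_contra fun hij => disjoint_left.mp (hf hij) hi hj

namespace Finset

variable {ι β : Type*} {f : ι → Set β} {x : β} [DecidablePred (x ∈ f ·)]

theorem card_filter_mem_le_one (hf : Pairwise (Disjoint on f)) (A : Finset ι) :
    (A.filter (x ∈ f ·)).card ≤ 1 :=
  card_le_one.mpr fun _ hi _ hj => hf.eq_of_mem_of_mem (mem_filter.mp hi).2 (mem_filter.mp hj).2

theorem card_filter_mem_eq_one (hf : Pairwise (Disjoint on f)) {A : Finset ι} {i : ι}
    (hi : i ∈ A) (hx : x ∈ f i) : (A.filter (x ∈ f ·)).card = 1 :=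
  (card_filter_mem_le_one hf A).antisymm (card_pos.mpr ⟨i, mem_filter.mpr ⟨hi, hx⟩⟩)

end Finset

section OrderedRing

variable {α : Type*} [Ring α] [PartialOrder α] [IsOrderedRing α]

theorem pairwise_disjoint_Ico_mul_natCast_add {k w : α} (hw : w ≤ k) :
    Pairwise (Disjoint on fun n : ℕ => Ico (k * n) (k * n + w)) := by
  intro a b hab
  have hcast (n : ℕ) : Ico ((n : ℤ) • k) (((n : ℤ) + 1) • k) = Ico (k * n) (k * n + k) := by
    simp [add_smul, Nat.cast_comm]
  have hdisj := pairwise_disjoint_Ico_zsmul k (Int.natCast_inj.not.mpr hab)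
  simp only [onFun, hcast] at hdisj
  exact hdisj.mono (Ico_subset_Ico_right (by gcongr)) (Ico_subset_Ico_right (by gcongr))

theorem pairwise_disjoint_Ico_natCast :
    Pairwise (Disjoint on fun n : ℕ => Ico (n : α) (n + 1)) := by
  simpa using pairwise_disjoint_Ico_mul_natCast_add (le_refl (1 : α))

theorem pairwise_disjoint_unit_squares {k : α} (hk : 1 ≤ k) :
    Pairwise (Disjoint on fun p : ℕ × ℕ =>
      Ico (k * p.2) (k * p.2 + 1) ×ˢ Ico (p.1 : α) (p.1 + 1)) := by
  intro p q hpq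
  rw [onFun, disjoint_prod]
  by_cases hcol : p.2 = q.2
  · exact Or.inr (pairwise_disjoint_Ico_natCast fun hrow => hpq (Prod.ext hrow hcol))
  · exact Or.inl (pairwise_disjoint_Ico_mul_natCast_add hk hcol)

theorem unit_square_index_eq {k : α} (hk : 1 ≤ k) {p : ℕ × ℕ} {i j : ℕ} {x : α × α}
    (hs : x ∈ Ico (k * p.2) (k * p.2 + 1) ×ˢ Ico (p.1 : α) (p.1 + 1))
    (hcol : x.1 ∈ Ico (k * j) (k * j + k)) (hrow : x.2 ∈ Ico (i : α) (i + 1)) : p = (i, j) :=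
  Prod.ext (pairwise_disjoint_Ico_natCast.eq_of_mem_of_mem hs.2 hrow)
    ((pairwise_disjoint_Ico_mul_natCast_add le_rfl).eq_of_mem_of_mem
      (Ico_subset_Ico_right (by gcongr) hs.1) hcol)

end OrderedRing

theorem gadget_witness_mem {k m i j : ℕ} (hk : 1 ≤ k) (hi1 : 1 ≤ i) (hik : i ≤ k)
    (hj1 : 1 ≤ j) (hjm : j ≤ m) :
    ((k : ℝ) * j, (i : ℝ)) ∈ Ico ((k : ℝ) * j) ((k : ℝ) * j + 1) ×ˢ Ico (i : ℝ) ((i : ℝ) + 1) ∧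
    ((k : ℝ) * j, (i : ℝ)) ∈ Ico ((k : ℝ) * j) ((k : ℝ) * j + k) ×ˢ Ico (1 : ℝ) ((k : ℝ) + 1) ∧
    ((k : ℝ) * j, (i : ℝ)) ∈
      Ico (k : ℝ) ((k : ℝ) + (k : ℝ) * (m : ℝ) ^ 2) ×ˢ Ico (i : ℝ) ((i : ℝ) + (k : ℝ) * (m : ℝ) ^ 2) ∧
    ((k : ℝ) * j, (i : ℝ)) ∈ Ico (k : ℝ) ((k : ℝ) + (k : ℝ) * (m : ℝ) ^ 2) ×ˢ
      Ico ((i : ℝ) + 1 - (k : ℝ) * (m : ℝ) ^ 2) ((i : ℝ) + 1) := by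
  have hk : (1 : ℝ) ≤ k := by exact_mod_cast hk
  have hi1 : (1 : ℝ) ≤ i := by exact_mod_cast hi1
  have hik : (i : ℝ) ≤ k := by exact_mod_cast hik
  have hj1 : (1 : ℝ) ≤ j := by exact_mod_cast hj1
  have hjm : (j : ℝ) ≤ (m : ℝ) ^ 2 := by
    have : (j : ℝ) ≤ m := by exact_mod_cast hjm
    nlinarith
  have hkm : (1 : ℝ) ≤ k * m ^ 2 := by nlinarith
  have hcol : (k : ℝ) * j ∈ Ico (k : ℝ) (k + k * m ^ 2) := ⟨by nlinarith, by nlinarith⟩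
  simp only [mem_prod, mem_Ico]
  refine ⟨⟨⟨le_rfl, ?_⟩, le_rfl, ?_⟩, ⟨⟨le_rfl, ?_⟩, ?_, ?_⟩, ⟨hcol, le_rfl, ?_⟩, ⟨hcol, ?_, ?_⟩⟩ <;>
    linarith

theorem depth_squares_gadget_general (k m i' : ℕ) (hk : 2 ≤ k)
    (hi'1 : 1 ≤ i') (hi'k : i' ≤ k)
    (A : Finset (ℕ × ℕ))
    (J : Finset ℕ) (hJ : J ⊆ Finset.Icc 1 m) :
    let s : ℕ × ℕ → Set (ℝ × ℝ) := fun p =>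
      Ico ((k:ℝ)*p.2) ((k:ℝ)*p.2 + 1) ×ˢ Ico (p.1:ℝ) ((p.1:ℝ) + 1)
    let bsq : ℕ → Set (ℝ × ℝ) := fun j =>
      Ico ((k:ℝ)*j) ((k:ℝ)*j + (k:ℝ)) ×ˢ Ico (1:ℝ) ((k:ℝ) + 1)
    let H₁ : Set (ℝ × ℝ) :=
      Ico (k:ℝ) ((k:ℝ) + (k:ℝ)*(m:ℝ)^2) ×ˢ Ico (i':ℝ) ((i':ℝ) + (k:ℝ)*(m:ℝ)^2)
    let H₂ : Set (ℝ × ℝ) :=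
      Ico (k:ℝ) ((k:ℝ) + (k:ℝ)*(m:ℝ)^2) ×ˢ Ico ((i':ℝ) + 1 - (k:ℝ)*(m:ℝ)^2) ((i':ℝ) + 1)
    let depth : (ℝ × ℝ) → ℕ := fun x =>
      (A.filter (fun p => x ∈ s p)).card + (J.filter (fun j => x ∈ bsq j)).card +
      (if x ∈ H₁ then 1 else 0) + (if x ∈ H₂ then 1 else 0)
    ((∃ j ∈ J, (i', j) ∈ A) → (∃ x, depth x = 4) ∧ (∀ x, depth x ≤ 4)) ∧
    ((¬ ∃ j ∈ J, (i', j) ∈ A) → ∀ x, depth x ≤ 3) := by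
  intro s bsq H₁ H₂ depth
  have hk1 : (1 : ℝ) ≤ k := by exact_mod_cast (by omega : 1 ≤ k)
  have hs : Pairwise (Disjoint on s) := pairwise_disjoint_unit_squares hk1
  have hb : Pairwise (Disjoint on bsq) := fun i j hij =>
    (pairwise_disjoint_Ico_mul_natCast_add le_rfl hij).set_prod_left _ _
  have hcount (x : ℝ × ℝ) :
      (A.filter (x ∈ s ·)).card ≤ 1 ∧ (J.filter (x ∈ bsq ·)).card ≤ 1 :=
    ⟨Finset.card_filter_mem_le_one hs A, Finset.card_filter_mem_le_one hb J⟩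
  refine ⟨fun ⟨j, hjJ, hjA⟩ => ⟨⟨((k : ℝ) * j, i'), ?_⟩, fun x => ?_⟩, fun hno x => ?_⟩
  · obtain ⟨hj1, hjm⟩ := Finset.mem_Icc.mp (hJ hjJ)
    obtain ⟨hxs, hxb, hx₁, hx₂⟩ := gadget_witness_mem (by omega) hi'1 hi'k hj1 hjm
    simp only [depth, H₁, H₂, Finset.card_filter_mem_eq_one hs hjA hxs,
      Finset.card_filter_mem_eq_one hb hjJ hxb, if_pos hx₁, if_pos hx₂]
  · have := hcount x
    simp only [depth]
    split_ifs <;> omega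
  · by_contra! h4
    have := hcount x
    simp only [depth] at h4
    split_ifs at h4 with hx₁ hx₂ <;> try omega
    obtain ⟨p, hp⟩ := Finset.card_pos.mp (by omega : 0 < (A.filter (x ∈ s ·)).card)
    obtain ⟨j, hj⟩ := Finset.card_pos.mp (by omega : 0 < (J.filter (x ∈ bsq ·)).card)
    rw [Finset.mem_filter] at hp hj
    have hpj : p = (i', j) := unit_square_index_eq hk1 hp.2 hj.2.1 ⟨hx₁.2.1, hx₂.2.2⟩
    exact hno ⟨j, hj.1, hpj ▸ hp.1⟩

theorem depth_squares_gadget (k m i' : ℕ) (hk : 2 ≤ k) (hm : 1 ≤ m)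
    (hi'1 : 1 ≤ i') (hi'k : i' ≤ k)
    (A : Finset (ℕ × ℕ)) (hA : A ⊆ Finset.Icc 1 k ×ˢ Finset.Icc 1 m)
    (J : Finset ℕ) (hJ : J ⊆ Finset.Icc 1 m) :
    let s : ℕ × ℕ → Set (ℝ × ℝ) := fun p =>
      Ico ((k:ℝ)*p.2) ((k:ℝ)*p.2 + 1) ×ˢ Ico (p.1:ℝ) ((p.1:ℝ) + 1)
    let bsq : ℕ → Set (ℝ × ℝ) := fun j =>
      Ico ((k:ℝ)*j) ((k:ℝ)*j + (k:ℝ)) ×ˢ Ico (1:ℝ) ((k:ℝ) + 1)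
    let H₁ : Set (ℝ × ℝ) :=
      Ico (k:ℝ) ((k:ℝ) + (k:ℝ)*(m:ℝ)^2) ×ˢ Ico (i':ℝ) ((i':ℝ) + (k:ℝ)*(m:ℝ)^2)
    let H₂ : Set (ℝ × ℝ) :=
      Ico (k:ℝ) ((k:ℝ) + (k:ℝ)*(m:ℝ)^2) ×ˢ Ico ((i':ℝ) + 1 - (k:ℝ)*(m:ℝ)^2) ((i':ℝ) + 1)
    let depth : (ℝ × ℝ) → ℕ := fun x =>
      (A.filter (fun p => x ∈ s p)).card + (J.filter (fun j => x ∈ bsq j)).card +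
      (if x ∈ H₁ then 1 else 0) + (if x ∈ H₂ then 1 else 0)
    ((∃ j ∈ J, (i', j) ∈ A) → (∃ x, depth x = 4) ∧ (∀ x, depth x ≤ 4)) ∧
    ((¬ ∃ j ∈ J, (i', j) ∈ A) → ∀ x, depth x ≤ 3) :=
  depth_squares_gadget_general k m i' hk hi'1 hi'k A J hJ
end
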